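/- arXiv:2510.22816 — 5 statements merged into one kernel-verified Lean document; each statement's English description precedes it below -/
import Mathlib

section
/- Let n ≥ 1, let p > 0, let f ∈ ℝ^n be a nonzero vector, and let e_1, …, e_n be independent rate-1 exponential random variables. Define z_i = |f_i| / e_i^{1/p}. Then almost surely there is a unique index attaining max_j z_j, and for every i ∈ {1,…,n} the probability that z_i > z_j for all j ≠ i equals |f_i|^p / ||f||_p^p. -/
/-!
For `s, t > 0` one has `a / s ^ (1/p) < b / t ^ (1/p) ↔ a ^ p * t < b ^ p * s`, so with the weights
`w j = |f j| ^ p` coordinate `i` wins exactly when `w j * e i < w i * e j` for all `j ≠ i`: an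
exponential race. Given `e i = t`, each rival loses independently with probability
`exp (-(w j / w i) * t)`; integrating the product against the law of `e i` (a Laplace transform)
gives `1 / (1 + S / w i) = w i / ∑ j, w j`, where `S` is the total weight of the rivals. The
winning events are disjoint and their probabilities sum to `1`, so almost surely some coordinate
wins, and it is unique.
-/

open MeasureTheory ProbabilityTheory Real Set Function

lemma ae_exists_mem_of_sum_measure_eq_one {Ω ι : Type*} [MeasurableSpace Ω] [Countable ι]
    {μ : Measure Ω} [IsProbabilityMeasure μ] {A : ι → Set Ω}
    (hA : ∀ i, NullMeasurableSet (A i) μ) (hdisj : Pairwise (Disjoint on A))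
    (hsum : ∑' i, μ (A i) = 1) : ∀ᵐ ω ∂μ, ∃ i, ω ∈ A i := by
  simp only [← mem_iUnion]
  rw [ae_mem_iff_measure_eq (.iUnion hA), measure_iUnion₀ (hdisj.mono fun _ _ h ↦ h.aedisjoint) hA,
    hsum, measure_univ]

lemma measurableSet_forall_ne_lt {α ι : Type*} [MeasurableSpace α] [Countable ι]
    {u v : ι → α → ℝ} (hu : ∀ j, Measurable (u j)) (hv : ∀ j, Measurable (v j)) (i : ι) :
    MeasurableSet {x | ∀ j ≠ i, u j x < v j x} := by
  simp only [ofPred_forall]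
  exact .iInter fun j ↦ .iInter fun _ ↦ measurableSet_lt (hu j) (hv j)

lemma div_rpow_one_div_lt_div_rpow_one_div_iff {p a b s t : ℝ} (hp : 0 < p) (ha : 0 ≤ a)
    (hb : 0 ≤ b) (hs : 0 < s) (ht : 0 < t) :
    a / s ^ (1 / p) < b / t ^ (1 / p) ↔ a ^ p * t < b ^ p * s := by
  have hpow : ∀ c u : ℝ, 0 ≤ c → 0 < u → (c * u ^ (1 / p)) ^ p = c ^ p * u := fun c u hc hu ↦ by
    rw [mul_rpow hc (rpow_nonneg hu.le _), ← rpow_mul hu.le, one_div_mul_cancel hp.ne', rpow_one]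
  rw [div_lt_div_iff₀ (rpow_pos_of_pos hs _) (rpow_pos_of_pos ht _),
    ← rpow_lt_rpow_iff (by positivity) (by positivity) hp, hpow a t ha ht, hpow b s hb hs]

section Exponential

variable {r : ℝ}

lemma expMeasure_Iic (hr : 0 < r) {x : ℝ} (hx : 0 ≤ x) :
    expMeasure r (Iic x) = ENNReal.ofReal (1 - exp (-(r * x))) := by
  have := isProbabilityMeasure_expMeasure hr
  rw [← ofReal_cdf, cdf_expMeasure_eq hr, if_pos hx]

lemma expMeasure_Iic_zero (hr : 0 < r) : expMeasure r (Iic 0) = 0 := by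
  simp [expMeasure_Iic hr le_rfl]

lemma ae_pos_expMeasure (hr : 0 < r) : ∀ᵐ x ∂expMeasure r, 0 < x :=
  ae_iff.2 (measure_mono_null (fun _ ↦ not_lt.1) (expMeasure_Iic_zero hr))

lemma expMeasure_Ioi (hr : 0 < r) {x : ℝ} (hx : 0 ≤ x) :
    expMeasure r (Ioi x) = ENNReal.ofReal (exp (-(r * x))) := by
  have := isProbabilityMeasure_expMeasure hr
  rw [← compl_Iic, prob_compl_eq_one_sub measurableSet_Iic, expMeasure_Iic hr hx,
    ← ENNReal.ofReal_one, ← ENNReal.ofReal_sub _ (sub_nonneg.2 (exp_le_one_iff.2 _)),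
    sub_sub_cancel]
  exact neg_nonpos.2 (mul_nonneg hr.le hx)

lemma lintegral_exp_neg_mul_expMeasure (hr : 0 < r) {b : ℝ} (hb : 0 ≤ b) :
    ∫⁻ x, ENNReal.ofReal (exp (-(b * x))) ∂expMeasure r = ENNReal.ofReal (r / (r + b)) := by
  have hrb : 0 < r + b := by linarith
  have hdensity : ∀ x, exponentialPDF r x * ENNReal.ofReal (exp (-(b * x)))
      = ENNReal.ofReal (r / (r + b)) * exponentialPDF (r + b) x := by
    intro x
    simp only [exponentialPDF_eq]
    split_ifs
    · rw [← ENNReal.ofReal_mul (by positivity), ← ENNReal.ofReal_mul (by positivity), mul_assoc,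
        ← exp_add]
      field_simp
      ring_nf
    · simp
  have hexp : expMeasure r = volume.withDensity (exponentialPDF r) := rfl
  have hmeas : ∀ s, Measurable (exponentialPDF s) :=
    fun s ↦ (measurable_exponentialPDFReal s).ennreal_ofReal
  rw [hexp, lintegral_withDensity_eq_lintegral_mul _ (hmeas r) (by fun_prop)]
  simp only [Pi.mul_apply, hdensity]
  rw [lintegral_const_mul _ (hmeas _), lintegral_exponentialPDF_eq_one hrb, mul_one]

instance isProbabilityMeasure_expMeasure_one : IsProbabilityMeasure (expMeasure 1) :=
  isProbabilityMeasure_expMeasure one_pos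

end Exponential

section Race

variable {m : ℕ} {w : Fin (m + 1) → ℝ}

lemma pi_expMeasure_race_of_pos (hw : ∀ j, 0 ≤ w j) {i : Fin (m + 1)} (hi : 0 < w i) :
    Measure.pi (fun _ ↦ expMeasure 1) {x | ∀ j ≠ i, w j * x i < w i * x j} =
      ENNReal.ofReal (w i / ∑ j, w j) := by
  set C : Set (ℝ × (Fin m → ℝ)) := {q | ∀ k, w (i.succAbove k) * q.1 < w i * q.2 k}
  have hC : MeasurableSet C := by
    simp only [C, ofPred_forall]
    exact MeasurableSet.iInter fun k ↦ measurableSet_lt (by fun_prop) (by fun_prop)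
  have hpre : MeasurableEquiv.piFinSuccAbove (fun _ ↦ ℝ) i ⁻¹' C =
      {x | ∀ j ≠ i, w j * x i < w i * x j} := by
    ext x
    exact ⟨fun h j hj ↦ by obtain ⟨k, rfl⟩ := Fin.exists_succAbove_eq hj; exact h k,
      fun h k ↦ h _ (Fin.succAbove_ne i k)⟩
  set S := ∑ k, w (i.succAbove k)
  have hS : ∑ j, w j = w i + S := Fin.sum_univ_succAbove w i
  have hslice : ∀ t, 0 < t →
      Measure.pi (fun _ ↦ expMeasure 1) (Prod.mk t ⁻¹' C) =
        ENNReal.ofReal (exp (-(S / w i * t))) := by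
    intro t ht
    have hbox : Prod.mk t ⁻¹' C = univ.pi fun k ↦ Ioi (w (i.succAbove k) / w i * t) := by
      ext y
      simp only [C, mem_preimage, mem_ofPred_eq, mem_univ_pi, mem_Ioi]
      refine forall_congr' fun k ↦ ?_
      rw [div_mul_eq_mul_div, div_lt_iff₀' hi]
    rw [hbox, Measure.pi_pi, Finset.prod_congr rfl fun k _ ↦
      expMeasure_Ioi one_pos (mul_nonneg (div_nonneg (hw _) hi.le) ht.le)]
    simp only [one_mul]
    rw [← ENNReal.ofReal_prod_of_nonneg fun k _ ↦ (exp_pos _).le, ← exp_sum,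
      Finset.sum_neg_distrib, ← Finset.sum_mul, ← Finset.sum_div]
  rw [← hpre, (measurePreserving_piFinSuccAbove _ i).measure_preimage hC.nullMeasurableSet,
    Measure.prod_apply hC, lintegral_congr_ae ((ae_pos_expMeasure one_pos).mono hslice),
    lintegral_exp_neg_mul_expMeasure one_pos
      (div_nonneg (Finset.sum_nonneg fun k _ ↦ hw _) hi.le), hS, one_add_div hi.ne', one_div_div]

theorem pi_expMeasure_race (hw : ∀ j, 0 ≤ w j) (hw0 : w ≠ 0) (i : Fin (m + 1)) :
    Measure.pi (fun _ ↦ expMeasure 1) {x | ∀ j ≠ i, w j * x i < w i * x j} =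
      ENNReal.ofReal (w i / ∑ j, w j) := by
  rcases (hw i).lt_or_eq with hpos | hzero
  · exact pi_expMeasure_race_of_pos hw hpos
  obtain ⟨k, hk⟩ := ne_iff.mp hw0
  have hki : k ≠ i := by rintro rfl; exact hk hzero.symm
  have hsub : {x : Fin (m + 1) → ℝ | ∀ j ≠ i, w j * x i < w i * x j} ⊆
      eval i ⁻¹' Iic 0 := fun x hx ↦ by
    have := hx k hki
    rw [← hzero, zero_mul] at this
    exact (neg_of_mul_neg_right this (hw k)).le
  rw [measure_mono_null hsub (Measure.pi_eval_preimage_null _ (expMeasure_Iic_zero one_pos)),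
    ← hzero, zero_div, ENNReal.ofReal_zero]

end Race

lemma ae_pos_pi_expMeasure {ι : Type*} [Fintype ι] :
    ∀ᵐ x ∂Measure.pi (fun _ : ι ↦ expMeasure 1), ∀ j, 0 < x j :=
  ae_all_iff.2 fun _ ↦ Measure.tendsto_eval_ae_ae.eventually (ae_pos_expMeasure one_pos)

theorem pi_expMeasure_lp_sampling {m : ℕ} {p : ℝ} (hp : 0 < p) {f : Fin (m + 1) → ℝ}
    (hf : f ≠ 0) :
    (∀ᵐ x ∂Measure.pi (fun _ ↦ expMeasure 1), ∃! i : Fin (m + 1), ∀ j ≠ i,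
        |f j| / x j ^ (1 / p) < |f i| / x i ^ (1 / p)) ∧
      ∀ i, Measure.pi (fun _ ↦ expMeasure 1)
          {x | ∀ j ≠ i, |f j| / x j ^ (1 / p) < |f i| / x i ^ (1 / p)} =
        ENNReal.ofReal (|f i| ^ p / ∑ j, |f j| ^ p) := by
  set w : Fin (m + 1) → ℝ := fun j ↦ |f j| ^ p
  have hw : ∀ j, 0 ≤ w j := fun j ↦ rpow_nonneg (abs_nonneg _) _
  obtain ⟨k, hk⟩ := ne_iff.mp hf
  have hwk : 0 < w k := rpow_pos_of_pos (abs_pos.2 hk) _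
  have hrace := pi_expMeasure_race hw (ne_iff.2 ⟨k, hwk.ne'⟩)
  have hiff : ∀ᵐ x ∂Measure.pi (fun _ ↦ expMeasure 1), ∀ i,
      (∀ j ≠ i, |f j| / x j ^ (1 / p) < |f i| / x i ^ (1 / p)) ↔
        ∀ j ≠ i, w j * x i < w i * x j :=
    ae_pos_pi_expMeasure.mono fun x hx i ↦ forall₂_congr fun j _ ↦
      div_rpow_one_div_lt_div_rpow_one_div_iff hp (abs_nonneg _) (abs_nonneg _) (hx j) (hx i)
  have hsum_pos : 0 < ∑ j, w j := Finset.sum_pos' (fun j _ ↦ hw j) ⟨k, Finset.mem_univ k, hwk⟩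
  have hwinner : ∀ᵐ x ∂Measure.pi (fun _ ↦ expMeasure 1), ∃ i, ∀ j ≠ i, w j * x i < w i * x j := by
    refine ae_exists_mem_of_sum_measure_eq_one
      (A := fun i ↦ {x : Fin (m + 1) → ℝ | ∀ j ≠ i, w j * x i < w i * x j})
      (fun i ↦ (measurableSet_forall_ne_lt (fun j ↦ by fun_prop) (fun j ↦ by fun_prop)
        i).nullMeasurableSet)
      (fun i i' hne ↦ disjoint_left.2 fun x hi hi' ↦ lt_asymm (hi i' hne.symm) (hi' i hne)) ?_
    rw [tsum_fintype, Finset.sum_congr rfl fun i _ ↦ hrace i,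
      ← ENNReal.ofReal_sum_of_nonneg fun i _ ↦ div_nonneg (hw i) hsum_pos.le, ← Finset.sum_div,
      div_self hsum_pos.ne', ENNReal.ofReal_one]
  refine ⟨?_, fun i ↦ ?_⟩
  · filter_upwards [hwinner, hiff] with x ⟨i, hi⟩ hx
    refine ⟨i, (hx i).2 hi, fun i' hi' ↦ ?_⟩
    by_contra hne
    exact lt_asymm (hi' i (Ne.symm hne)) ((hx i).2 hi i' hne)
  · rw [← hrace i]
    exact measure_congr (Filter.eventuallyEq_set.2 (hiff.mono fun x hx ↦ hx i))

theorem perfect_lp_sampling_probability_general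
    {Ω : Type*} [MeasurableSpace Ω] (μ : Measure Ω)
    (n : ℕ) (p : ℝ) (hp : 0 < p)
    (f : Fin n → ℝ) (hf : f ≠ 0)
    (e : Fin n → Ω → ℝ)
    (hindep : iIndepFun e μ)
    (hdist : ∀ i, Measure.map (e i) μ = expMeasure 1) :
    (∀ᵐ ω ∂μ, ∃! i : Fin n, ∀ j : Fin n, j ≠ i →
        |f j| / (e j ω) ^ (1 / p) < |f i| / (e i ω) ^ (1 / p)) ∧
      ∀ i : Fin n,
        μ {ω | ∀ j : Fin n, j ≠ i →
            |f j| / (e j ω) ^ (1 / p) < |f i| / (e i ω) ^ (1 / p)} =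
          ENNReal.ofReal (|f i| ^ p / ∑ j, |f j| ^ p) := by
  obtain ⟨m, rfl⟩ : ∃ m, n = m + 1 :=
    Nat.exists_eq_succ_of_ne_zero fun hn ↦ hf (by subst hn; exact Subsingleton.elim _ _)
  -- `Measure.map` along a function that is not a.e.-measurable is `0`.
  have he : ∀ i, AEMeasurable (e i) μ := fun i ↦
    .of_map_ne_zero (by rw [hdist i]; exact IsProbabilityMeasure.ne_zero _)
  have hX : AEMeasurable (fun ω j ↦ e j ω) μ := aemeasurable_pi_lambda _ he
  have hlaw : μ.map (fun ω j ↦ e j ω) = Measure.pi fun _ ↦ expMeasure 1 := by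
    rw [hindep.map_fun_eq_pi_map he]
    simp only [hdist]
  obtain ⟨hunique, hprob⟩ := pi_expMeasure_lp_sampling hp hf
  rw [← hlaw] at hunique hprob
  refine ⟨ae_of_ae_map hX hunique, fun i ↦ ?_⟩
  rw [← hprob i, Measure.map_apply_of_aemeasurable hX
    (measurableSet_forall_ne_lt (fun j ↦ by fun_prop) (fun j ↦ by fun_prop) i)]
  rfl

/-- Let `n ≥ 1`, `p > 0`, let `f ∈ ℝⁿ` be a nonzero vector, and let
`e 1, …, e n` be independent rate-1 exponential random variables.  Define
`z i = |f i| / (e i) ^ (1/p)`.  Then almost surely there is a unique index attaining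
`max_j z j`, and for every `i` the probability that `z i > z j` for all `j ≠ i` equals
`|f i| ^ p / ‖f‖_p ^ p`. -/
theorem perfect_lp_sampling_probability
    {Ω : Type*} [MeasurableSpace Ω] (μ : Measure Ω) [IsProbabilityMeasure μ]
    (n : ℕ) (hn : 1 ≤ n) (p : ℝ) (hp : 0 < p)
    (f : Fin n → ℝ) (hf : f ≠ 0)
    (e : Fin n → Ω → ℝ) (hmeas : ∀ i, Measurable (e i))
    (hindep : iIndepFun e μ)
    (hdist : ∀ i, Measure.map (e i) μ = expMeasure 1) :
    (∀ᵐ ω ∂μ, ∃! i : Fin n, ∀ j : Fin n, j ≠ i →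
        |f j| / (e j ω) ^ (1 / p) < |f i| / (e i ω) ^ (1 / p)) ∧
      ∀ i : Fin n,
        μ {ω | ∀ j : Fin n, j ≠ i →
            |f j| / (e j ω) ^ (1 / p) < |f i| / (e i ω) ^ (1 / p)} =
          ENNReal.ofReal (|f i| ^ p / ∑ j, |f j| ^ p) :=
  perfect_lp_sampling_probability_general μ n p hp f hf e hindep hdist
end

section
/- Let n ≥ 1, let p > 0, let f ∈ ℝ^n be a nonzero vector, and let e_1, …, e_n be independent rate-1 exponential random variables. Define z_i = |f_i| / e_i^{1/p} and Z = max_{1≤i≤n} z_i. Then Z^{−p} is exponentially distributed with rate ||f||_p^p; equivalently, Z has the same distribution as ||f||_p / E^{1/p}, where E is a rate-1 exponential random variable. -/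
/-!
For `t ≥ 0` and all `e i > 0`, the event `Z ^ (-p) > t` says `t * Z ^ p < 1`, and since `Z ^ p` is
the largest of the `z i ^ p = |f i| ^ p / e i`, it is the event that `e i > t * |f i| ^ p` for every
`i`. By independence it has probability `∏ i, exp (-(t * |f i| ^ p)) = exp (-(t * ‖f‖_p ^ p))`,
the tail of `Exp(‖f‖_p ^ p)`. The law of `Z` is the image of that law under `y ↦ y ^ (-1/p)`, and
an `Exp(r)` variable is `E / r` for a rate-1 exponential `E`.
-/

open MeasureTheory ProbabilityTheory Real Set

lemma MonotoneOn.apply_ciSup_lt_iff {ι α β : Type*} [Finite ι] [Nonempty ι]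
    [ConditionallyCompleteLinearOrder α] [Preorder β] {φ : α → β} {s : Set α}
    (hφ : MonotoneOn φ s) {z : ι → α} (hz : ∀ i, z i ∈ s) {c : β} :
    φ (⨆ i, z i) < c ↔ ∀ i, φ (z i) < c := by
  obtain ⟨k, hk⟩ := exists_eq_ciSup_of_finite (f := z)
  rw [← hk]
  exact ⟨fun h i => (hφ (hz i) (hz k) (hk ▸ le_ciSup (Finite.bddAbove_range z) i)).trans_lt h,
    fun h => h k⟩

lemma lt_rpow_neg_iSup_div_iff {ι : Type*} [Finite ι] {p t : ℝ} (hp : 0 < p) (ht : 0 ≤ t)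
    {a x : ι → ℝ} (ha : ∀ i, 0 ≤ a i) (ha' : ∃ i, 0 < a i) (hx : ∀ i, 0 < x i) :
    t < (⨆ i, a i / x i ^ (1 / p)) ^ (-p) ↔ ∀ i, t * a i ^ p < x i := by
  obtain ⟨j, hj⟩ := ha'
  have : Nonempty ι := ⟨j⟩
  have hz : ∀ i, 0 ≤ a i / x i ^ (1 / p) := fun i => div_nonneg (ha i) (rpow_nonneg (hx i).le _)
  have hZ : 0 < ⨆ i, a i / x i ^ (1 / p) :=
    (div_pos hj (rpow_pos_of_pos (hx j) _)).trans_le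
      (le_ciSup (f := fun i => a i / x i ^ (1 / p)) (Finite.bddAbove_range _) j)
  have hmono : MonotoneOn (fun y => t * y ^ p) (Ici 0) := fun y hy y' _ hyy' =>
    mul_le_mul_of_nonneg_left (rpow_le_rpow hy hyy' hp.le) ht
  rw [rpow_neg hZ.le, inv_eq_one_div, lt_div_iff₀ (rpow_pos_of_pos hZ p)]
  refine (hmono.apply_ciSup_lt_iff hz).trans (forall_congr' fun i => ?_)
  rw [div_rpow (ha i) (rpow_nonneg (hx i).le _), one_div, rpow_inv_rpow (hx i).le hp.ne',
    mul_div_assoc', div_lt_one (hx i)]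

namespace ProbabilityTheory

lemma expMeasure_Ioi {r t : ℝ} (hr : 0 < r) (ht : 0 ≤ t) :
    expMeasure r (Ioi t) = ENNReal.ofReal (exp (-(r * t))) := by
  have := isProbabilityMeasure_expMeasure hr
  have hexp : exp (-(r * t)) ≤ 1 := exp_le_one_iff.2 (neg_nonpos.2 (mul_nonneg hr.le ht))
  rw [← compl_Iic, prob_compl_eq_one_sub measurableSet_Iic, ← ofReal_cdf, cdf_expMeasure_eq hr,
    if_pos ht, ← ENNReal.ofReal_one, ← ENNReal.ofReal_sub _ (sub_nonneg.2 hexp), sub_sub_cancel]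

lemma ae_pos_expMeasure {r : ℝ} (hr : 0 < r) : ∀ᵐ x ∂expMeasure r, 0 < x := by
  have := isProbabilityMeasure_expMeasure hr
  refine (prob_compl_eq_zero_iff measurableSet_Ioi).2 ?_
  rw [expMeasure_Ioi hr le_rfl, mul_zero, neg_zero, exp_zero, ENNReal.ofReal_one]

lemma aemeasurable_of_map_eq_expMeasure {Ω : Type*} [MeasurableSpace Ω] {μ : Measure Ω}
    {X : Ω → ℝ} {r : ℝ} (hr : 0 < r) (hX : μ.map X = expMeasure r) : AEMeasurable X μ :=
  .of_map_ne_zero (hX ▸ (isProbabilityMeasure_expMeasure hr).ne_zero)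

lemma ae_pos_of_map_eq_expMeasure {Ω : Type*} [MeasurableSpace Ω] {μ : Measure Ω} {X : Ω → ℝ}
    {r : ℝ} (hr : 0 < r) (hX : μ.map X = expMeasure r) : ∀ᵐ ω ∂μ, 0 < X ω :=
  ae_of_ae_map (aemeasurable_of_map_eq_expMeasure hr hX) (hX ▸ ae_pos_expMeasure hr)

lemma measure_Ioi_eq_exp_neg_mul_max {r : ℝ} {ν : Measure ℝ} [IsProbabilityMeasure ν]
    (h : ∀ t, 0 ≤ t → ν (Ioi t) = ENNReal.ofReal (exp (-(r * t)))) (t : ℝ) :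
    ν (Ioi t) = ENNReal.ofReal (exp (-(r * max t 0))) := by
  rcases le_total 0 t with ht | ht
  · rw [max_eq_left ht, h t ht]
  · rw [max_eq_right ht, mul_zero, neg_zero, exp_zero, ENNReal.ofReal_one]
    refine le_antisymm prob_le_one ?_
    calc 1 = ν (Ioi 0) := by rw [h 0 le_rfl, mul_zero, neg_zero, exp_zero, ENNReal.ofReal_one]
      _ ≤ ν (Ioi t) := measure_mono (Ioi_subset_Ioi ht)

lemma eq_expMeasure_of_measure_Ioi {r : ℝ} (hr : 0 < r) {ν : Measure ℝ} [IsProbabilityMeasure ν]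
    (h : ∀ t, 0 ≤ t → ν (Ioi t) = ENNReal.ofReal (exp (-(r * t)))) : ν = expMeasure r := by
  have := isProbabilityMeasure_expMeasure hr
  refine Measure.ext_of_Iic _ _ fun t => ?_
  rw [← compl_Ioi, prob_compl_eq_one_sub measurableSet_Ioi,
    prob_compl_eq_one_sub measurableSet_Ioi, measure_Ioi_eq_exp_neg_mul_max h,
    measure_Ioi_eq_exp_neg_mul_max fun t ht => expMeasure_Ioi hr ht]

lemma map_div_expMeasure_one {r : ℝ} (hr : 0 < r) : (expMeasure 1).map (· / r) = expMeasure r := by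
  have := isProbabilityMeasure_expMeasure one_pos
  have hdiv : Measurable (· / r : ℝ → ℝ) := measurable_id.div_const r
  have := Measure.isProbabilityMeasure_map (μ := expMeasure 1) hdiv.aemeasurable
  refine eq_expMeasure_of_measure_Ioi hr fun t ht => ?_
  have hpre : (· / r) ⁻¹' Ioi t = Ioi (r * t) := by
    ext x
    simp [lt_div_iff₀ hr, mul_comm]
  rw [Measure.map_apply hdiv measurableSet_Ioi, hpre, expMeasure_Ioi one_pos (by positivity),
    one_mul]

lemma map_rpow_neg_inv_expMeasure {r : ℝ} (hr : 0 < r) (p : ℝ) :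
    (expMeasure r).map (· ^ (-p)⁻¹) = (expMeasure 1).map (fun x => r ^ (1 / p) / x ^ (1 / p)) := by
  rw [← map_div_expMeasure_one hr, Measure.map_map (by fun_prop) (by fun_prop)]
  refine Measure.map_congr ((ae_pos_expMeasure one_pos).mono fun x hx => ?_)
  simp only [Function.comp_apply, one_div]
  rw [inv_neg, rpow_neg (div_nonneg hx.le hr.le), div_rpow hx.le hr.le, inv_div]

lemma iIndepFun.measure_iInter_preimage_Ioi_of_expMeasure {ι Ω : Type*} [Fintype ι]
    [MeasurableSpace Ω] {μ : Measure Ω} {e : ι → Ω → ℝ} {r c : ι → ℝ} (hindep : iIndepFun e μ)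
    (hr : ∀ i, 0 < r i) (hdist : ∀ i, μ.map (e i) = expMeasure (r i)) (hc : ∀ i, 0 ≤ c i) :
    μ (⋂ i, e i ⁻¹' Ioi (c i)) = ENNReal.ofReal (exp (-∑ i, r i * c i)) := by
  rw [hindep.meas_iInter fun i => ⟨Ioi (c i), measurableSet_Ioi, rfl⟩, ← Finset.sum_neg_distrib,
    exp_sum, ENNReal.ofReal_prod_of_nonneg fun i _ => (exp_pos _).le]
  refine Finset.prod_congr rfl fun i _ => ?_
  rw [← Measure.map_apply_of_aemeasurable (aemeasurable_of_map_eq_expMeasure (hr i) (hdist i))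
    measurableSet_Ioi, hdist i, expMeasure_Ioi (hr i) (hc i)]

lemma map_eq_of_map_rpow_neg_eq_expMeasure {Ω : Type*} [MeasurableSpace Ω] {μ : Measure Ω}
    {X : Ω → ℝ} {p r : ℝ} (hp : p ≠ 0) (hr : 0 < r) (hX : AEMeasurable X μ)
    (hX_nonneg : ∀ᵐ ω ∂μ, 0 ≤ X ω) (hlaw : μ.map (fun ω => X ω ^ (-p)) = expMeasure r) :
    μ.map X = (expMeasure 1).map (fun x => r ^ (1 / p) / x ^ (1 / p)) :=
  calc μ.map X = μ.map (fun ω => (X ω ^ (-p)) ^ (-p)⁻¹) :=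
        Measure.map_congr (hX_nonneg.mono fun ω h => (rpow_rpow_inv h (neg_ne_zero.2 hp)).symm)
    _ = (μ.map fun ω => X ω ^ (-p)).map (· ^ (-p)⁻¹) :=
        (AEMeasurable.map_map_of_aemeasurable (g := (· ^ (-p)⁻¹)) (by fun_prop)
          (hX.pow_const _)).symm
    _ = _ := by rw [hlaw, map_rpow_neg_inv_expMeasure hr]

lemma map_rpow_neg_iSup_div_eq_expMeasure {Ω ι : Type*} [MeasurableSpace Ω] {μ : Measure Ω}
    [IsProbabilityMeasure μ] [Fintype ι] {e : ι → Ω → ℝ} {a : ι → ℝ} {p : ℝ} (hp : 0 < p)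
    (ha : ∀ i, 0 ≤ a i) (ha' : ∃ i, 0 < a i) (hindep : iIndepFun e μ)
    (hdist : ∀ i, μ.map (e i) = expMeasure 1) :
    μ.map (fun ω => (⨆ i, a i / e i ω ^ (1 / p)) ^ (-p)) = expMeasure (∑ i, a i ^ p) := by
  obtain ⟨j, hj⟩ := ha'
  have hS : 0 < ∑ i, a i ^ p :=
    Finset.sum_pos' (fun i _ => rpow_nonneg (ha i) p) ⟨j, Finset.mem_univ j, rpow_pos_of_pos hj p⟩
  have hpos : ∀ᵐ ω ∂μ, ∀ i, 0 < e i ω :=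
    ae_all_iff.2 fun i => ae_pos_of_map_eq_expMeasure one_pos (hdist i)
  have hY : AEMeasurable (fun ω => (⨆ i, a i / e i ω ^ (1 / p)) ^ (-p)) μ :=
    (AEMeasurable.iSup fun i => aemeasurable_const.div
      ((aemeasurable_of_map_eq_expMeasure one_pos (hdist i)).pow_const _)).pow_const _
  have := Measure.isProbabilityMeasure_map hY
  refine eq_expMeasure_of_measure_Ioi hS fun t ht => ?_
  have hevent : (fun ω => (⨆ i, a i / e i ω ^ (1 / p)) ^ (-p)) ⁻¹' Ioi t
      =ᵐ[μ] ⋂ i, e i ⁻¹' Ioi (t * a i ^ p) :=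
    Filter.eventuallyEq_set.2 <| hpos.mono fun ω hω => by
      simpa only [mem_preimage, mem_Ioi, mem_iInter] using
        lt_rpow_neg_iSup_div_iff hp ht ha ⟨j, hj⟩ hω
  rw [Measure.map_apply_of_aemeasurable hY measurableSet_Ioi, measure_congr hevent,
    iIndepFun.measure_iInter_preimage_Ioi_of_expMeasure hindep (fun _ => one_pos) hdist
      fun i => mul_nonneg ht (rpow_nonneg (ha i) p), Finset.sum_mul]
  simp only [one_mul, mul_comm (a _ ^ p) t]

end ProbabilityTheory

theorem max_scaled_coordinate_distribution_general
    {Ω : Type*} [MeasurableSpace Ω] (μ : Measure Ω) [IsProbabilityMeasure μ]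
    (n : ℕ) (p : ℝ) (hp : 0 < p)
    (f : Fin n → ℝ) (hf : f ≠ 0)
    (e : Fin n → Ω → ℝ)
    (hindep : iIndepFun e μ)
    (hdist : ∀ i, Measure.map (e i) μ = expMeasure 1) :
    Measure.map (fun ω => (⨆ i : Fin n, |f i| / (e i ω) ^ (1 / p)) ^ (-p)) μ
        = expMeasure (∑ i, |f i| ^ p) ∧
      Measure.map (fun ω => ⨆ i : Fin n, |f i| / (e i ω) ^ (1 / p)) μ
        = Measure.map (fun x : ℝ => (∑ i, |f i| ^ p) ^ (1 / p) / x ^ (1 / p))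
            (expMeasure 1) := by
  obtain ⟨j, hj⟩ : ∃ j, 0 < |f j| := (Function.ne_iff.mp hf).imp fun _ => abs_pos.2
  have hS : 0 < ∑ i, |f i| ^ p :=
    Finset.sum_pos' (fun i _ => by positivity) ⟨j, Finset.mem_univ j, by positivity⟩
  have he : ∀ i, AEMeasurable (e i) μ :=
    fun i => aemeasurable_of_map_eq_expMeasure one_pos (hdist i)
  have hlaw := map_rpow_neg_iSup_div_eq_expMeasure hp (fun i => abs_nonneg (f i)) ⟨j, hj⟩
    hindep hdist
  refine ⟨hlaw, map_eq_of_map_rpow_neg_eq_expMeasure hp.ne' hS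
    (.iSup fun i => aemeasurable_const.div ((he i).pow_const _)) ?_ hlaw⟩
  filter_upwards [ae_all_iff.2 fun i => ae_pos_of_map_eq_expMeasure one_pos (hdist i)] with ω hω
  exact Real.iSup_nonneg fun i => div_nonneg (abs_nonneg _) (rpow_nonneg (hω i).le _)

/-- With `z i = |f i| / (e i) ^ (1/p)` built from independent rate-1
exponentials and `Z = max_i z i`, the random variable `Z ^ (-p)` is exponentially
distributed with rate `‖f‖_p ^ p`; equivalently, `Z` has the same distribution as
`‖f‖_p / E ^ (1/p)` for a rate-1 exponential `E`. -/
theorem max_scaled_coordinate_distribution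
    {Ω : Type*} [MeasurableSpace Ω] (μ : Measure Ω) [IsProbabilityMeasure μ]
    (n : ℕ) (hn : 1 ≤ n) (p : ℝ) (hp : 0 < p)
    (f : Fin n → ℝ) (hf : f ≠ 0)
    (e : Fin n → Ω → ℝ) (hmeas : ∀ i, Measurable (e i))
    (hindep : iIndepFun e μ)
    (hdist : ∀ i, Measure.map (e i) μ = expMeasure 1) :
    Measure.map (fun ω => (⨆ i : Fin n, |f i| / (e i ω) ^ (1 / p)) ^ (-p)) μ
        = expMeasure (∑ i, |f i| ^ p) ∧
      Measure.map (fun ω => ⨆ i : Fin n, |f i| / (e i ω) ^ (1 / p)) μ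
        = Measure.map (fun x : ℝ => (∑ i, |f i| ^ p) ^ (1 / p) / x ^ (1 / p))
            (expMeasure 1) :=
  max_scaled_coordinate_distribution_general μ n p hp f hf e hindep hdist
end

section
/- There exists an absolute constant K such that the following holds. Let a, b > 0, let a_0 ∈ [0.99a, 1.01a] and b_0 ∈ [0.99b, 1.01b], let 0 < ε ≤ 1/100, and let Q ≥ 1 be an integer. Let (â^{(1)}, b̂^{(1)}), …, (â^{(Q)}, b̂^{(Q)}) be mutually independent square-integrable real random variables (all 2Q variables mutually independent) with |E[â^{(l)}] − a| ≤ εa, |E[b̂^{(l)}] − b| ≤ εb, Var(â^{(l)}) ≤ a²/5, and Var(b̂^{(l)}) ≤ b²/5 for each l. Define z = Σ_{q=0}^Q (−1)^q (a_0+b_0)^{−(q+1)} ∏_{l=1}^q ((â^{(l)} − a_0) + (b̂^{(l)} − b_0)). Then |E[z] − 1/(a+b)| ≤ K(Qε + (1/40)^Q)/(a+b) and E[z²] ≤ K(Q+1)²/(a+b)². -/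
/-!
Write `c = a₀ + b₀`, `d = (a + b) - c` and `Y_l = (A_l - a₀) + (B_l - b₀)`, so that
`z = ∑_q (-1)^q c^{-(q+1)} ∏_{l<q} Y_l` and `1/(a+b) = ∑_q (-1)^q c^{-(q+1)} d^q`.
Grouping the independent family `(A_l)_l, (B_l)_l` into pairs makes the `Y_l` independent, so
`E z` is the same truncated series with every `Y_l` replaced by its mean `m_l`, and
`|m_l - d| ≤ ε (a+b)`, `|m_l|, |d| ≤ c/40`. Each product then differs from `d^q` by at most
`q ε (a+b) (c/40)^{q-1}`, which sums to `O(ε/(a+b))`, and the tail of the Taylor series of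
`1/(c+d)` is `O(40^{-(Q+1)}/(a+b))`. For the second moment, Cauchy–Schwarz over the `Q+1` terms
and `E Y_l² = Var A_l + Var B_l + m_l² ≤ c²/4` leave a geometric series of ratio `1/4`.
-/

open MeasureTheory ProbabilityTheory Finset

/-- The randomized truncated bivariate Taylor estimator
`z = Σ_{q=0}^Q (−1)^q (a₀+b₀)^{−(q+1)} ∏_{l=1}^q ((A l − a₀) + (B l − b₀))`
(the product over `l = 1, …, q` being the product over the first `q` of the `Q`
estimator pairs; empty product = 1). -/
noncomputable def bivarTaylorEst {Ω : Type} (a₀ b₀ : ℝ) (Q : ℕ)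
    (A B : Fin Q → Ω → ℝ) (ω : Ω) : ℝ :=
  ∑ q ∈ Finset.range (Q + 1),
    (-1 : ℝ) ^ q / (a₀ + b₀) ^ (q + 1) *
      ∏ l ∈ Finset.univ.filter (fun l : Fin Q => (l : ℕ) < q),
        ((A l ω - a₀) + (B l ω - b₀))

namespace ProbabilityTheory

variable {Ω : Type*} {mΩ : MeasurableSpace Ω} {μ : Measure Ω}

theorem iIndepFun.prodMk_sumElim {ι β : Type*} [Fintype ι] [MeasurableSpace β]
    {X Y : ι → Ω → β} (h : iIndepFun (Sum.elim X Y) μ)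
    (hX : ∀ i, AEMeasurable (X i) μ) (hY : ∀ i, AEMeasurable (Y i) μ) :
    iIndepFun (fun i ω ↦ (X i ω, Y i ω)) μ := by
  have := h.isProbabilityMeasure
  have hXY : ∀ j, AEMeasurable (Sum.elim X Y j) μ := Sum.rec hX hY
  let e := (MeasurableEquiv.sumPiEquivProdPi fun _ : ι ⊕ ι ↦ β).trans
    (MeasurableEquiv.arrowProdEquivProdArrow β β ι).symm
  have he : MeasurePreserving e (.pi fun j ↦ μ.map (Sum.elim X Y j))
      (.pi fun i ↦ (μ.map (X i)).prod (μ.map (Y i))) :=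
    (measurePreserving_sumPiEquivProdPi _).trans
      ((measurePreserving_arrowProdEquivProdArrow β β ι _ _).symm _)
  rw [iIndepFun_iff_map_fun_eq_pi_map fun i ↦ (hX i).prodMk (hY i)]
  calc μ.map (fun ω i ↦ (X i ω, Y i ω))
      = (μ.map fun ω j ↦ Sum.elim X Y j ω).map e :=
        (AEMeasurable.map_map_of_aemeasurable e.measurable.aemeasurable
          (aemeasurable_pi_lambda _ hXY)).symm
    _ = .pi fun i ↦ (μ.map (X i)).prod (μ.map (Y i)) := by
        rw [h.map_fun_eq_pi_map hXY, he.map_eq]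
    _ = .pi fun i ↦ μ.map fun ω ↦ (X i ω, Y i ω) := by
        congr! with i
        exact ((h.indepFun Sum.inl_ne_inr).map_prod_eq_prod_map_map (hX i) (hY i)).symm

theorem iIndepFun.sumElim_add_sub_const {ι : Type*} [Fintype ι] {X Y : ι → Ω → ℝ}
    (h : iIndepFun (Sum.elim X Y) μ) (hX : ∀ i, AEMeasurable (X i) μ)
    (hY : ∀ i, AEMeasurable (Y i) μ) (c : ℝ) :
    iIndepFun (fun i ω ↦ X i ω + Y i ω - c) μ :=
  (h.prodMk_sumElim hX hY).comp (fun _ p ↦ p.1 + p.2 - c) fun _ ↦ by fun_prop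

section Products

variable {ι κ : Type*} {X : ι → Ω → ℝ}

theorem iIndepFun.integrable_finset_prod (h : iIndepFun X μ)
    (hX : ∀ i, Integrable (X i) μ) (s : Finset ι) :
    Integrable (fun ω ↦ ∏ i ∈ s, X i ω) μ := by
  classical
  induction s using Finset.induction_on with
  | empty => have := h.isProbabilityMeasure; simp
  | insert i s hi ih =>
    have hind := h.indepFun_finsetProd_of_notMem₀ (fun j ↦ (hX j).aemeasurable) hi
    convert hind.integrable_mul (by simpa only [prod_fn] using ih) (hX i) using 1
    ext ω
    simp [prod_insert hi, mul_comm]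

theorem iIndepFun.integral_finset_prod (h : iIndepFun X μ)
    (hX : ∀ i, AEStronglyMeasurable (X i) μ) (s : Finset ι) :
    ∫ ω, ∏ i ∈ s, X i ω ∂μ = ∏ i ∈ s, ∫ ω, X i ω ∂μ := by
  convert (h.precomp Subtype.val_injective).integral_fun_prod_eq_prod_integral
    (fun i : s ↦ hX i) using 1
  · congr 1 with ω
    exact (prod_coe_sort s _).symm
  · exact (prod_coe_sort s _).symm

theorem iIndepFun.integral_sum_mul_prod (h : iIndepFun X μ) (hX : ∀ i, Integrable (X i) μ)
    (T : Finset κ) (w : κ → ℝ) (S : κ → Finset ι) :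
    ∫ ω, ∑ k ∈ T, w k * ∏ i ∈ S k, X i ω ∂μ = ∑ k ∈ T, w k * ∏ i ∈ S k, ∫ ω, X i ω ∂μ := by
  rw [integral_finsetSum _ fun k _ ↦ (h.integrable_finset_prod hX (S k)).const_mul (w k)]
  simp_rw [integral_const_mul, h.integral_finset_prod fun i ↦ (hX i).1]

theorem iIndepFun.integral_sq_sum_mul_prod_le (h : iIndepFun X μ) (hX : ∀ i, MemLp (X i) 2 μ)
    (T : Finset κ) (w : κ → ℝ) (S : κ → Finset ι) :
    ∫ ω, (∑ k ∈ T, w k * ∏ i ∈ S k, X i ω) ^ 2 ∂μ ≤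
      #T * ∑ k ∈ T, w k ^ 2 * ∏ i ∈ S k, ∫ ω, X i ω ^ 2 ∂μ := by
  have hsq : iIndepFun (fun i ω ↦ X i ω ^ 2) μ := h.comp (fun _ x ↦ x ^ 2) fun _ ↦ by fun_prop
  have hsq_int : ∀ i, Integrable (fun ω ↦ X i ω ^ 2) μ := fun i ↦ (hX i).integrable_sq
  rw [← hsq.integral_sum_mul_prod hsq_int, ← integral_const_mul]
  refine integral_mono_of_nonneg (ae_of_all _ fun ω ↦ sq_nonneg _)
    (((integrable_finsetSum _ fun k _ ↦
      (hsq.integrable_finset_prod hsq_int (S k)).const_mul _)).const_mul _)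
    (ae_of_all _ fun ω ↦ ?_)
  simpa only [mul_pow, prod_pow] using sq_sum_le_card_mul_sum_sq (s := T)
    (f := fun k ↦ w k * ∏ i ∈ S k, X i ω)

end Products

section Summand

variable [IsProbabilityMeasure μ] {X Y : Ω → ℝ}

theorem integral_add_sub_const (hX : Integrable X μ) (hY : Integrable Y μ) (c : ℝ) :
    ∫ ω, (X ω + Y ω - c) ∂μ = ∫ ω, X ω ∂μ + ∫ ω, Y ω ∂μ - c := by
  rw [integral_sub (hX.fun_add hY) (integrable_const c), integral_add hX hY, integral_const]
  simp

theorem IndepFun.integral_sq_add_sub_const (h : IndepFun X Y μ) (hX : MemLp X 2 μ)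
    (hY : MemLp Y 2 μ) (c : ℝ) :
    ∫ ω, (X ω + Y ω - c) ^ 2 ∂μ = Var[X; μ] + Var[Y; μ] + (∫ ω, X ω ∂μ + ∫ ω, Y ω ∂μ - c) ^ 2 := by
  have hvar : Var[fun ω ↦ X ω + Y ω - c; μ] = Var[X; μ] + Var[Y; μ] :=
    (variance_sub_const (hX.add hY).1 c).trans (h.variance_add hX hY)
  rw [← hvar, variance_eq_sub (X := fun ω ↦ X ω + Y ω - c) ((hX.add hY).sub (memLp_const c)),
    ← integral_add_sub_const (hX.integrable one_le_two) (hY.integrable one_le_two)]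
  simp

end Summand

end ProbabilityTheory

theorem abs_prod_sub_pow_card_le {ι : Type*} (s : Finset ι) {x : ι → ℝ} {y M δ : ℝ}
    (hy : |y| ≤ M) (hx : ∀ i ∈ s, |x i| ≤ M) (hxy : ∀ i ∈ s, |x i - y| ≤ δ) :
    |∏ i ∈ s, x i - y ^ #s| ≤ #s * δ * M ^ (#s - 1) := by
  classical
  induction s using Finset.induction_on with
  | empty => simp
  | insert i s hi ih =>
    have ih := ih (fun j hj ↦ hx j (mem_insert_of_mem hj)) fun j hj ↦ hxy j (mem_insert_of_mem hj)
    have hxi := hx i (mem_insert_self i s)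
    have hxyi := hxy i (mem_insert_self i s)
    have hM : 0 ≤ M := (abs_nonneg y).trans hy
    have hδ : 0 ≤ δ := (abs_nonneg _).trans hxyi
    have hMpow : M * (#s * δ * M ^ (#s - 1)) = #s * δ * M ^ #s := by
      rcases Nat.eq_zero_or_pos #s with h | h
      · simp [h]
      · rw [← Nat.sub_add_cancel h, Nat.add_sub_cancel, pow_succ]; ring
    rw [prod_insert hi, card_insert_of_notMem hi, Nat.add_sub_cancel, Nat.cast_succ]
    calc |x i * ∏ j ∈ s, x j - y ^ (#s + 1)|
        = |x i * (∏ j ∈ s, x j - y ^ #s) + (x i - y) * y ^ #s| := by ring_nf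
      _ ≤ |x i| * |∏ j ∈ s, x j - y ^ #s| + |x i - y| * |y| ^ #s :=
        (abs_add_le _ _).trans_eq (by rw [abs_mul, abs_mul, abs_pow])
      _ ≤ M * (#s * δ * M ^ (#s - 1)) + δ * M ^ #s := by gcongr
      _ = (#s + 1) * δ * M ^ #s := by rw [hMpow]; ring

theorem sum_range_neg_one_pow_div_pow_mul_pow {c d : ℝ} (hc : c ≠ 0) (hcd : c + d ≠ 0) (n : ℕ) :
    ∑ q ∈ range n, (-1) ^ q / c ^ (q + 1) * d ^ q = (1 - (-d / c) ^ n) / (c + d) := by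
  have hterm : ∀ q, (-1) ^ q / c ^ (q + 1) * d ^ q = (-d / c) ^ q / c := fun q ↦ by
    rw [show -d / c = -1 * (d / c) by ring, mul_pow, div_pow, pow_succ]; field_simp
  have h1x : 1 - -d / c = (c + d) / c := by field_simp; ring
  simp_rw [hterm, ← sum_div]
  rw [eq_div_iff hcd, ← mul_neg_geom_sum, h1x]
  field_simp

theorem natCast_mul_pow_pred_le (q : ℕ) : (q : ℝ) * (1 / 40) ^ (q - 1) ≤ 2 * (1 / 2) ^ q := by
  rcases q with _ | k
  · simp
  · have hk : (k : ℝ) + 1 ≤ 20 ^ k := by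
      exact_mod_cast (Nat.lt_two_pow_self (n := k)).trans_le (Nat.pow_le_pow_left (by norm_num) k)
    calc ((k + 1 : ℕ) : ℝ) * (1 / 40) ^ (k + 1 - 1)
        ≤ 20 ^ k * (1 / 40) ^ k := by push_cast; gcongr
      _ = 2 * (1 / 2) ^ (k + 1) := by rw [← mul_pow, pow_succ]; ring_nf

theorem abs_prod_sub_pow_card_div_pow_le {ι : Type*} (s : Finset ι) {m : ι → ℝ} {c d δ : ℝ}
    (hc : 0 < c) (hδ : 0 ≤ δ) (hd : |d| ≤ c / 40) (hm : ∀ i ∈ s, |m i| ≤ c / 40)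
    (hmd : ∀ i ∈ s, |m i - d| ≤ δ) :
    |∏ i ∈ s, m i - d ^ #s| / c ^ (#s + 1) ≤ δ / c ^ 2 * (2 * (1 / 2) ^ #s) := by
  calc |∏ i ∈ s, m i - d ^ #s| / c ^ (#s + 1)
      ≤ #s * δ * (c / 40) ^ (#s - 1) / c ^ (#s + 1) := by
        gcongr
        exact abs_prod_sub_pow_card_le s hd hm hmd
    _ = δ / c ^ 2 * (#s * (1 / 40) ^ (#s - 1)) := by
        rcases Nat.eq_zero_or_pos #s with h | h
        · simp [h]
        · rw [← Nat.sub_add_cancel h, Nat.add_sub_cancel, pow_succ]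
          field_simp
          push_cast
          ring
    _ ≤ δ / c ^ 2 * (2 * (1 / 2) ^ #s) :=
        mul_le_mul_of_nonneg_left (natCast_mul_pow_pred_le #s) (by positivity)

theorem abs_sum_neg_one_pow_div_pow_mul_prod_sub_inv_le {ι : Type*} {S : ℕ → Finset ι} {Q : ℕ}
    (hS : ∀ q ≤ Q, #(S q) = q) {m : ι → ℝ} {c d δ : ℝ} (hc : 0 < c) (hcd : 0 < c + d)
    (hδ : 0 ≤ δ) (hd : |d| ≤ c / 40) (hm : ∀ i, |m i| ≤ c / 40) (hmd : ∀ i, |m i - d| ≤ δ) :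
    |∑ q ∈ range (Q + 1), (-1) ^ q / c ^ (q + 1) * ∏ i ∈ S q, m i - 1 / (c + d)| ≤
      4 * δ / c ^ 2 + (1 / 40) ^ (Q + 1) / (c + d) := by
  have hterm : ∀ q ∈ range (Q + 1),
      |(-1) ^ q / c ^ (q + 1) * (∏ i ∈ S q, m i - d ^ q)| ≤ δ / c ^ 2 * (2 * (1 / 2) ^ q) := by
    intro q hq
    have h := abs_prod_sub_pow_card_div_pow_le (S q) hc hδ hd (fun i _ ↦ hm i) fun i _ ↦ hmd i
    rw [hS q (mem_range_succ_iff.1 hq)] at h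
    rwa [abs_mul, abs_div, abs_pow, abs_neg, abs_one, one_pow, abs_of_pos (pow_pos hc _),
      one_div_mul_eq_div]
  have htail : |(-d / c) ^ (Q + 1) / (c + d)| ≤ (1 / 40) ^ (Q + 1) / (c + d) := by
    rw [abs_div, abs_pow, abs_of_pos hcd, abs_div, abs_neg, abs_of_pos hc]
    refine div_le_div_of_nonneg_right (pow_le_pow_left₀ (by positivity) ?_ _) hcd.le
    rw [div_le_iff₀ hc]
    linarith
  have hsplit : ∑ q ∈ range (Q + 1), (-1) ^ q / c ^ (q + 1) * ∏ i ∈ S q, m i - 1 / (c + d) =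
      ∑ q ∈ range (Q + 1), (-1) ^ q / c ^ (q + 1) * (∏ i ∈ S q, m i - d ^ q) -
        (-d / c) ^ (Q + 1) / (c + d) := by
    simp_rw [mul_sub, sum_sub_distrib,
      sum_range_neg_one_pow_div_pow_mul_pow hc.ne' hcd.ne']
    ring
  rw [hsplit]
  calc _ ≤ ∑ q ∈ range (Q + 1), |(-1) ^ q / c ^ (q + 1) * (∏ i ∈ S q, m i - d ^ q)| +
        |(-d / c) ^ (Q + 1) / (c + d)| :=
        (abs_sub _ _).trans (by gcongr; exact abs_sum_le_sum_abs _ _)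
    _ ≤ ∑ q ∈ range (Q + 1), δ / c ^ 2 * (2 * (1 / 2) ^ q) + (1 / 40) ^ (Q + 1) / (c + d) :=
        add_le_add (sum_le_sum hterm) htail
    _ ≤ 4 * δ / c ^ 2 + (1 / 40) ^ (Q + 1) / (c + d) := by
        rw [← mul_sum, ← mul_sum, mul_comm 4, mul_div_right_comm]
        have := sum_geometric_two_le (Q + 1)
        gcongr
        linarith

theorem sum_sq_neg_one_pow_div_pow_mul_prod_le {ι : Type*} {S : ℕ → Finset ι} {Q : ℕ}
    (hS : ∀ q ≤ Q, #(S q) = q) {v : ι → ℝ} {c : ℝ} (hc : 0 < c) (hv₀ : ∀ i, 0 ≤ v i)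
    (hv : ∀ i, v i ≤ c ^ 2 / 4) :
    ∑ q ∈ range (Q + 1), ((-1) ^ q / c ^ (q + 1)) ^ 2 * ∏ i ∈ S q, v i ≤ 2 / c ^ 2 := by
  calc _ ≤ ∑ q ∈ range (Q + 1), (1 / 2) ^ q / c ^ 2 := sum_le_sum fun q hq ↦ ?_
    _ ≤ 2 / c ^ 2 := by rw [← sum_div]; gcongr; exact sum_geometric_two_le _
  have hprod : ∏ i ∈ S q, v i ≤ (c ^ 2 / 4) ^ q := by
    simpa only [prod_const, hS q (mem_range_succ_iff.1 hq)] using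
      prod_le_prod (s := S q) (fun i _ ↦ hv₀ i) fun i _ ↦ hv i
  calc ((-1) ^ q / c ^ (q + 1)) ^ 2 * ∏ i ∈ S q, v i
      ≤ ((-1) ^ q / c ^ (q + 1)) ^ 2 * (c ^ 2 / 4) ^ q := by gcongr
    _ = (1 / 4) ^ q / c ^ 2 := by
        rw [div_pow, ← pow_mul, mul_comm q 2, pow_mul, neg_one_sq, one_pow]
        field_simp
        ring
    _ ≤ (1 / 2) ^ q / c ^ 2 := by gcongr; norm_num

theorem bivarTaylorEst_eq_sum {Ω : Type} (a₀ b₀ : ℝ) (Q : ℕ) (A B : Fin Q → Ω → ℝ) (ω : Ω) :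
    bivarTaylorEst a₀ b₀ Q A B ω =
      ∑ q ∈ range (Q + 1), (-1) ^ q / (a₀ + b₀) ^ (q + 1) *
        ∏ l ∈ univ.filter (fun l : Fin Q ↦ (l : ℕ) < q), (A l ω + B l ω - (a₀ + b₀)) := by
  unfold bivarTaylorEst
  refine sum_congr rfl fun q _ ↦ congrArg _ (prod_congr rfl fun l _ ↦ by ring)

section Moments

variable {Ω : Type} {mΩ : MeasurableSpace Ω} {μ : Measure Ω} [IsProbabilityMeasure μ]
  {a₀ b₀ : ℝ} {Q : ℕ} {A B : Fin Q → Ω → ℝ}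

theorem integral_bivarTaylorEst (hind : iIndepFun (Sum.elim A B) μ)
    (hA : ∀ l, Integrable (A l) μ) (hB : ∀ l, Integrable (B l) μ) :
    ∫ ω, bivarTaylorEst a₀ b₀ Q A B ω ∂μ =
      ∑ q ∈ range (Q + 1), (-1) ^ q / (a₀ + b₀) ^ (q + 1) *
        ∏ l ∈ univ.filter (fun l : Fin Q ↦ (l : ℕ) < q),
          (∫ ω, A l ω ∂μ + ∫ ω, B l ω ∂μ - (a₀ + b₀)) := by
  simp_rw [bivarTaylorEst_eq_sum, ← integral_add_sub_const (hA _) (hB _)]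
  exact (hind.sumElim_add_sub_const (fun l ↦ (hA l).aemeasurable) (fun l ↦ (hB l).aemeasurable)
    _).integral_sum_mul_prod (fun l ↦ ((hA l).add (hB l)).sub (integrable_const _)) _ _ _

theorem integral_sq_bivarTaylorEst_le (hind : iIndepFun (Sum.elim A B) μ)
    (hA : ∀ l, MemLp (A l) 2 μ) (hB : ∀ l, MemLp (B l) 2 μ) :
    ∫ ω, bivarTaylorEst a₀ b₀ Q A B ω ^ 2 ∂μ ≤
      (Q + 1) * ∑ q ∈ range (Q + 1), ((-1) ^ q / (a₀ + b₀) ^ (q + 1)) ^ 2 *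
        ∏ l ∈ univ.filter (fun l : Fin Q ↦ (l : ℕ) < q),
          (Var[A l; μ] + Var[B l; μ] + (∫ ω, A l ω ∂μ + ∫ ω, B l ω ∂μ - (a₀ + b₀)) ^ 2) := by
  have hAB (l : Fin Q) : IndepFun (A l) (B l) μ := hind.indepFun Sum.inl_ne_inr
  simp_rw [bivarTaylorEst_eq_sum, ← (hAB _).integral_sq_add_sub_const (hA _) (hB _)]
  refine ((hind.sumElim_add_sub_const (fun l ↦ (hA l).aemeasurable)
    (fun l ↦ (hB l).aemeasurable) _).integral_sq_sum_mul_prod_le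
    (fun l ↦ ((hA l).add (hB l)).sub (memLp_const _)) (range (Q + 1))
    (fun q ↦ (-1) ^ q / (a₀ + b₀) ^ (q + 1))
    fun q ↦ univ.filter fun l : Fin Q ↦ (l : ℕ) < q).trans_eq ?_
  rw [card_range, Nat.cast_succ]

end Moments

theorem four_mul_div_sq_add_pow_succ_div_le {t c ε : ℝ} {Q : ℕ} (ht : 0 < t) (hc : 0.99 * t ≤ c)
    (hε : 0 ≤ ε) (hQ : 1 ≤ Q) :
    4 * (ε * t) / c ^ 2 + (1 / 40) ^ (Q + 1) / t ≤ 5 * (Q * ε + (1 / 40) ^ Q) / t := by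
  have hQ' : (1 : ℝ) ≤ Q := by exact_mod_cast hQ
  have hc2 : 0.98 * t ^ 2 ≤ c ^ 2 := by nlinarith
  have h1 : 4 * (ε * t) / c ^ 2 ≤ 5 * (Q * ε) / t := by
    rw [div_le_div_iff₀ (by nlinarith) ht]
    nlinarith [mul_le_mul_of_nonneg_left hc2 hε,
      mul_le_mul_of_nonneg_right hQ' (by positivity : 0 ≤ ε * c ^ 2)]
  have h2 : (1 / 40 : ℝ) ^ (Q + 1) / t ≤ 5 * (1 / 40) ^ Q / t := by
    gcongr
    rw [pow_succ]
    nlinarith [pow_pos (by norm_num : (0 : ℝ) < 1 / 40) Q]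
  calc _ ≤ 5 * (Q * ε) / t + 5 * (1 / 40) ^ Q / t := add_le_add h1 h2
    _ = _ := by ring

theorem natCast_succ_mul_two_div_sq_le {t c : ℝ} (Q : ℕ) (ht : 0 < t) (hc : 0.99 * t ≤ c) :
    (Q + 1) * (2 / c ^ 2) ≤ 5 * (Q + 1) ^ 2 / t ^ 2 := by
  rw [mul_div_assoc', div_le_div_iff₀ (by nlinarith) (by positivity)]
  have hc2 : 0.98 * t ^ 2 ≤ c ^ 2 := by nlinarith
  have hQ : (Q : ℝ) + 1 ≤ (Q + 1) ^ 2 := by nlinarith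
  nlinarith [mul_le_mul_of_nonneg_left hc2 (by positivity : (0 : ℝ) ≤ (Q + 1) ^ 2),
    mul_le_mul_of_nonneg_right hQ (sq_nonneg t)]

/-- **randomized bivariate Taylor estimator for `1/(a+b)`.** There is
an absolute constant `K` such that: for `a, b > 0`, `a₀ ∈ [0.99a, 1.01a]`,
`b₀ ∈ [0.99b, 1.01b]`, `0 < ε ≤ 1/100`, and `Q ≥ 1`, if the `2Q` square-integrable
random variables `A 1, …, A Q, B 1, …, B Q` are mutually independent with
`|E[A l] − a| ≤ ε a`, `|E[B l] − b| ≤ ε b`, `Var(A l) ≤ a²/5` and `Var(B l) ≤ b²/5`,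
then `|E[z] − 1/(a+b)| ≤ K (Q ε + (1/40)^Q)/(a+b)` and `E[z²] ≤ K (Q+1)²/(a+b)²`. -/
theorem randomized_bivariate_taylor_estimator :
    ∃ K : ℝ, ∀ (Ω : Type) (mΩ : MeasurableSpace Ω) (μ : Measure Ω),
      IsProbabilityMeasure μ →
      ∀ a b a₀ b₀ ε : ℝ, 0 < a → 0 < b →
      0.99 * a ≤ a₀ → a₀ ≤ 1.01 * a → 0.99 * b ≤ b₀ → b₀ ≤ 1.01 * b →
      0 < ε → ε ≤ 1 / 100 →
      ∀ Q : ℕ, 1 ≤ Q →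
      ∀ A B : Fin Q → Ω → ℝ,
        iIndepFun
          (Sum.elim A B) μ →
        (∀ l, MemLp (A l) 2 μ) → (∀ l, MemLp (B l) 2 μ) →
        (∀ l, |(∫ ω, A l ω ∂μ) - a| ≤ ε * a) →
        (∀ l, |(∫ ω, B l ω ∂μ) - b| ≤ ε * b) →
        (∀ l, variance (A l) μ ≤ a ^ 2 / 5) →
        (∀ l, variance (B l) μ ≤ b ^ 2 / 5) →
        |(∫ ω, bivarTaylorEst a₀ b₀ Q A B ω ∂μ) - 1 / (a + b)| ≤
            K * ((Q : ℝ) * ε + (1 / 40) ^ Q) / (a + b) ∧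
          ∫ ω, (bivarTaylorEst a₀ b₀ Q A B ω) ^ 2 ∂μ ≤
            K * ((Q : ℝ) + 1) ^ 2 / (a + b) ^ 2 := by
  refine ⟨5, fun Ω _ μ _ a b a₀ b₀ ε ha hb ha₀ ha₀' hb₀ hb₀' hε hε' Q hQ A B hind hA hB
    hEA hEB hVA hVB ↦ ?_⟩
  set c := a₀ + b₀
  set t := a + b
  have ht : 0 < t := by positivity
  have hc : 0.99 * t ≤ c := by linarith
  have hc₀ : 0 < c := by linarith
  have hS : ∀ q ≤ Q, #(univ.filter fun l : Fin Q ↦ (l : ℕ) < q) = q := fun q hq ↦ by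
    simp [Fin.card_filter_val_lt, hq]
  set m : Fin Q → ℝ := fun l ↦ ∫ ω, A l ω ∂μ + ∫ ω, B l ω ∂μ - c
  have hmd : ∀ l, |m l - (t - c)| ≤ ε * t := fun l ↦ by
    rw [abs_le]
    constructor <;> linarith [abs_le.1 (hEA l), abs_le.1 (hEB l)]
  have hd : |t - c| ≤ c / 40 := by rw [abs_le]; constructor <;> linarith
  have hm : ∀ l, |m l| ≤ c / 40 := fun l ↦ by
    have := abs_le.1 (hmd l); rw [abs_le]; constructor <;> nlinarith
  have hv : ∀ l, Var[A l; μ] + Var[B l; μ] + m l ^ 2 ≤ c ^ 2 / 4 := fun l ↦ by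
    nlinarith [hVA l, hVB l, sq_le_sq' (abs_le.1 (hm l)).1 (abs_le.1 (hm l)).2]
  constructor
  · rw [integral_bivarTaylorEst hind (fun l ↦ (hA l).integrable one_le_two)
      fun l ↦ (hB l).integrable one_le_two]
    have hbias := abs_sum_neg_one_pow_div_pow_mul_prod_sub_inv_le hS hc₀
      (by simpa using ht) (by positivity) hd hm hmd
    rw [add_sub_cancel] at hbias
    exact hbias.trans (four_mul_div_sq_add_pow_succ_div_le ht hc hε.le hQ)
  · refine (integral_sq_bivarTaylorEst_le hind hA hB).trans ?_
    calc _ ≤ (Q + 1) * (2 / c ^ 2) := by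
          gcongr
          exact sum_sq_neg_one_pow_div_pow_mul_prod_le hS hc₀ (fun l ↦
            add_nonneg (add_nonneg (variance_nonneg _ _) (variance_nonneg _ _)) (sq_nonneg _)) hv
      _ ≤ _ := natCast_succ_mul_two_div_sq_le Q ht hc
end

section
/- Let n ≥ 1, let u, v ∈ ℝ^n with u_i ≠ 0 for all i, and let δ ≥ 0. Let w be a random index in {1,…,n} whose distribution satisfies |Pr[w = i] − u_i² / ||u||₂²| ≤ δ for every i. Let Û be a square-integrable real random variable independent of w with E[Û²] = ||u||₂², and let V̂ be a real random variable with E[V̂ | w = i] = v_i for every i, such that Û is independent of the pair (w, V̂). Define W = V̂ · Û² / u_w. Then |E[W] − ⟨u, v⟩| ≤ δ · Σ_{i=1}^n |v_i| · ||u||₂² / |u_i|, where ⟨u,v⟩ = Σ_i u_i v_i. -/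
/-!
Since `Û` is independent of `(w, V̂)`, the estimator factorises:
`E[W] = E[Û²] · E[V̂ / u_w] = ‖u‖₂² · Σᵢ vᵢ pᵢ / uᵢ` with `pᵢ = Pr[w = i]`, using
`E[V̂; w = i] = vᵢ pᵢ` on each fibre of `w`. The exact sampler `pᵢ = uᵢ² / ‖u‖₂²` would give
`⟨u, v⟩`, so the bias is `Σᵢ (vᵢ ‖u‖₂² / uᵢ) (pᵢ - uᵢ² / ‖u‖₂²)`, and each factor
`pᵢ - uᵢ² / ‖u‖₂²` is at most `δ` in absolute value.
-/

open MeasureTheory ProbabilityTheory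

namespace MeasureTheory

variable {Ω ι : Type*} [MeasurableSpace Ω] {μ : Measure Ω}
  [Fintype ι] [MeasurableSpace ι] [MeasurableSingletonClass ι] {w : Ω → ι}

theorem integral_eq_sum_setIntegral_fibre {E : Type*} [NormedAddCommGroup E] [NormedSpace ℝ E]
    (hw : Measurable w) {f : Ω → E} (hf : Integrable f μ) :
    ∫ ω, f ω ∂μ = ∑ i, ∫ ω in {ω | w ω = i}, f ω ∂μ := by
  have hcover : (⋃ i, {ω | w ω = i}) = Set.univ :=
    Set.iUnion_eq_univ_iff.2 fun ω => ⟨w ω, rfl⟩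
  rw [← setIntegral_univ, ← hcover]
  exact integral_iUnion_fintype (fun i => hw (measurableSet_singleton i))
    (fun i j hij => Set.disjoint_left.2 fun ω hi hj => hij (hi.symm.trans hj))
    (fun _ => hf.integrableOn)

theorem Integrable.div_comp {V : Ω → ℝ} (hV : Integrable V μ) (hw : Measurable w) (c : ι → ℝ) :
    Integrable (fun ω => V ω / c (w ω)) μ := by
  simp_rw [div_eq_mul_inv]
  refine hV.mul_bdd (c := ∑ i, ‖(c i)⁻¹‖)
    ((measurable_of_countable c).comp hw).inv.aestronglyMeasurable (ae_of_all _ fun ω => ?_)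
  exact Finset.single_le_sum (fun i _ => norm_nonneg (c i)⁻¹) (Finset.mem_univ (w ω))

theorem integral_div_comp_eq_sum {V : Ω → ℝ} (hV : Integrable V μ) (hw : Measurable w)
    (c : ι → ℝ) :
    ∫ ω, V ω / c (w ω) ∂μ = ∑ i, (∫ ω in {ω | w ω = i}, V ω ∂μ) / c i := by
  rw [integral_eq_sum_setIntegral_fibre hw (hV.div_comp hw c)]
  refine Finset.sum_congr rfl fun i _ => ?_
  rw [← integral_div]
  exact setIntegral_congr_fun (hw (measurableSet_singleton i)) fun ω (hω : w ω = i) => by rw [hω]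

end MeasureTheory

theorem abs_sum_sq_mul_sum_div_sub_sum_mul_le {ι : Type*} [Fintype ι] {u v p : ι → ℝ} {δ : ℝ}
    (hu : ∀ i, u i ≠ 0) (hp : ∀ i, |p i - u i ^ 2 / ∑ j, u j ^ 2| ≤ δ) :
    |(∑ j, u j ^ 2) * ∑ i, v i * p i / u i - ∑ i, u i * v i| ≤
      δ * ∑ i, |v i| * (∑ j, u j ^ 2) / |u i| := by
  set S := ∑ j, u j ^ 2
  -- `ι` may be empty; `S > 0` is only needed at an index `i`, where `S ≥ u i ^ 2 > 0`.
  have hS : ∀ i, 0 < S := fun i => (pow_two_pos_of_ne_zero (hu i)).trans_le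
    (Finset.single_le_sum (fun j _ => sq_nonneg (u j)) (Finset.mem_univ i))
  have hterm : ∀ i, S * (v i * p i / u i) - u i * v i = v i * S / u i * (p i - u i ^ 2 / S) := by
    intro i
    have := (hS i).ne'
    have := hu i
    field_simp
  calc |S * ∑ i, v i * p i / u i - ∑ i, u i * v i|
      = |∑ i, v i * S / u i * (p i - u i ^ 2 / S)| := by
        simp_rw [Finset.mul_sum, ← Finset.sum_sub_distrib, hterm]
    _ ≤ ∑ i, |v i * S / u i * (p i - u i ^ 2 / S)| := Finset.abs_sum_le_sum_abs _ _
    _ ≤ ∑ i, |v i| * S / |u i| * δ := by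
        gcongr with i
        rw [abs_mul, abs_div, abs_mul, abs_of_pos (hS i)]
        gcongr
        exact hp i
    _ = δ * ∑ i, |v i| * S / |u i| := by rw [← Finset.sum_mul, mul_comm]

theorem inner_product_estimator_bias_general
    {Ω : Type*} [MeasurableSpace Ω] (μ : Measure Ω)
    (n : ℕ) (u v : Fin n → ℝ) (hu : ∀ i, u i ≠ 0)
    (δ : ℝ)
    (w : Ω → Fin n) (hw : Measurable w)
    (hpr : ∀ i, |(μ {ω | w ω = i}).toReal - u i ^ 2 / ∑ j, u j ^ 2| ≤ δ)
    (Uhat : Ω → ℝ) (hUmem : MemLp Uhat 2 μ)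
    (hU2 : ∫ ω, Uhat ω ^ 2 ∂μ = ∑ j, u j ^ 2)
    (Vhat : Ω → ℝ) (hVint : Integrable Vhat μ)
    (hVcond : ∀ i, ∫ ω in {ω | w ω = i}, Vhat ω ∂μ = v i * (μ {ω | w ω = i}).toReal)
    (hindep : IndepFun Uhat (fun ω => (w ω, Vhat ω)) μ) :
    |(∫ ω, Vhat ω * Uhat ω ^ 2 / u (w ω) ∂μ) - ∑ i, u i * v i| ≤
      δ * ∑ i, |v i| * (∑ j, u j ^ 2) / |u i| := by
  have hindep_factors : IndepFun (fun ω => Uhat ω ^ 2) (fun ω => Vhat ω / u (w ω)) μ :=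
    hindep.comp (measurable_id.pow_const 2)
      (measurable_snd.div ((measurable_of_countable u).comp measurable_fst))
  have hfactor : ∫ ω, Vhat ω * Uhat ω ^ 2 / u (w ω) ∂μ =
      (∫ ω, Uhat ω ^ 2 ∂μ) * ∫ ω, Vhat ω / u (w ω) ∂μ := by
    simp_rw [mul_comm (Vhat _), mul_div_assoc]
    exact hindep_factors.integral_fun_mul_eq_mul_integral (hUmem.1.pow 2)
      (hVint.div_comp hw u).aestronglyMeasurable
  rw [hfactor, hU2, integral_div_comp_eq_sum hVint hw u]
  simp_rw [hVcond]
  exact abs_sum_sq_mul_sum_div_sub_sum_mul_le hu hpr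

/-- **inner-product estimator from an approximate `L₂` sampler, bias.**
Let `u, v ∈ ℝⁿ` with all `u i ≠ 0` and let `δ ≥ 0`.  Let `w` be a random index with
`|Pr[w = i] − u i ² / ‖u‖₂²| ≤ δ` for every `i`, let `Û` be square-integrable with
`E[Û²] = ‖u‖₂²` and independent of the pair `(w, V̂)`, and let `V̂` be an (integrable)
random variable whose conditional expectation on each event `{w = i}` is `v i`
(expressed as `∫_{w = i} V̂ = v i · Pr[w = i]`).  Then for `W = V̂ · Û² / u_w`,
`|E[W] − ⟨u, v⟩| ≤ δ · Σ_i |v i| ‖u‖₂² / |u i|`. -/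
theorem inner_product_estimator_bias
    {Ω : Type*} [MeasurableSpace Ω] (μ : Measure Ω) [IsProbabilityMeasure μ]
    (n : ℕ) (hn : 1 ≤ n) (u v : Fin n → ℝ) (hu : ∀ i, u i ≠ 0)
    (δ : ℝ) (hδ : 0 ≤ δ)
    (w : Ω → Fin n) (hw : Measurable w)
    (hpr : ∀ i, |(μ {ω | w ω = i}).toReal - u i ^ 2 / ∑ j, u j ^ 2| ≤ δ)
    (Uhat : Ω → ℝ) (hUmeas : Measurable Uhat) (hUmem : MemLp Uhat 2 μ)
    (hU2 : ∫ ω, Uhat ω ^ 2 ∂μ = ∑ j, u j ^ 2)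
    (Vhat : Ω → ℝ) (hVmeas : Measurable Vhat) (hVint : Integrable Vhat μ)
    (hVcond : ∀ i, ∫ ω in {ω | w ω = i}, Vhat ω ∂μ = v i * (μ {ω | w ω = i}).toReal)
    (hindep : IndepFun Uhat (fun ω => (w ω, Vhat ω)) μ) :
    |(∫ ω, Vhat ω * Uhat ω ^ 2 / u (w ω) ∂μ) - ∑ i, u i * v i| ≤
      δ * ∑ i, |v i| * (∑ j, u j ^ 2) / |u i| :=
  inner_product_estimator_bias_general μ n u v hu δ w hw hpr Uhat hUmem hU2 Vhat hVint hVcond hindep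
end

section
/- Let n ≥ 1, let u, v ∈ ℝ^n with u_i ≠ 0 for all i, let δ ≥ 0 and γ > 0 with ||v||₂² ≤ γ · ||u||₂², and let K₁, K₂ ≥ 0. Let w be a random index in {1,…,n} whose distribution satisfies |Pr[w = i] − u_i² / ||u||₂²| ≤ δ for every i. Let Û be a real random variable independent of w with E[Û⁴] ≤ K₁ · ||u||₂⁴, and let V̂ be a real random variable with E[V̂² | w = i] ≤ K₂ · v_i² for every i, such that Û is independent of the pair (w, V̂). Define W = V̂ · Û² / u_w. Then E[W²] ≤ K₁K₂ · (γ · ||u||₂⁴ + δ · ||u||₂⁴ · Σ_{i=1}^n v_i² / u_i²). -/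
open MeasureTheory ProbabilityTheory Finset

/-!
By independence, `E[W²] = E[Û⁴] · E[V̂² / u_w²]`. Splitting the second factor over the
fibres `{w = i}` and using the conditional bound on `V̂²` gives
`E[V̂² / u_w²] ≤ K₂ Σᵢ (vᵢ² / uᵢ²) Pr[w = i]`, and `Pr[w = i] ≤ uᵢ² / ‖u‖₂² + δ` turns this into
`K₂ (‖v‖₂² / ‖u‖₂² + δ Σᵢ vᵢ² / uᵢ²) ≤ K₂ (γ + δ Σᵢ vᵢ² / uᵢ²)`.
-/

theorem sum_div_sq_mul_le_of_le_add {ι : Type*} [Fintype ι] {u v p : ι → ℝ} (δ : ℝ)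
    (hu : ∀ i, u i ≠ 0) (hp : ∀ i, p i ≤ u i ^ 2 / ∑ j, u j ^ 2 + δ) :
    ∑ i, v i ^ 2 / u i ^ 2 * p i ≤
      (∑ i, v i ^ 2) / ∑ j, u j ^ 2 + δ * ∑ i, v i ^ 2 / u i ^ 2 :=
  calc ∑ i, v i ^ 2 / u i ^ 2 * p i
      ≤ ∑ i, v i ^ 2 / u i ^ 2 * (u i ^ 2 / ∑ j, u j ^ 2 + δ) :=
        sum_le_sum fun i _ => mul_le_mul_of_nonneg_left (hp i) (by positivity)
    _ = (∑ i, v i ^ 2) / ∑ j, u j ^ 2 + δ * ∑ i, v i ^ 2 / u i ^ 2 := by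
        rw [sum_div, mul_sum, ← sum_add_distrib]
        refine sum_congr rfl fun i _ => ?_
        field_simp [hu i]

section RandomIndex

variable {Ω ι : Type*} [Fintype ι] {w : Ω → ι}

theorem comp_mul_eq_sum_mul_indicator (c : ι → ℝ) (f : Ω → ℝ) :
    (fun ω => c (w ω) * f ω) = fun ω => ∑ i, c i * {ω | w ω = i}.indicator f ω := by
  classical
  funext ω
  simp [Set.indicator_apply]

variable [MeasurableSpace Ω] {μ : Measure Ω} [MeasurableSpace ι] [MeasurableSingletonClass ι]

theorem integrable_comp_mul (hw : Measurable w) (c : ι → ℝ) {f : Ω → ℝ}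
    (hf : Integrable f μ) : Integrable (fun ω => c (w ω) * f ω) μ := by
  rw [comp_mul_eq_sum_mul_indicator]
  exact integrable_finsetSum _ fun i _ =>
    (hf.indicator (hw (measurableSet_singleton i))).const_mul (c i)

theorem integral_comp_mul_eq_sum (hw : Measurable w) (c : ι → ℝ) {f : Ω → ℝ}
    (hf : Integrable f μ) :
    ∫ ω, c (w ω) * f ω ∂μ = ∑ i, c i * ∫ ω in {ω | w ω = i}, f ω ∂μ := by
  have hfibre (i : ι) : MeasurableSet {ω | w ω = i} := hw (measurableSet_singleton i)
  rw [comp_mul_eq_sum_mul_indicator, integral_finsetSum _ fun i _ =>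
    (hf.indicator (hfibre i)).const_mul (c i)]
  refine sum_congr rfl fun i _ => ?_
  rw [integral_const_mul, integral_indicator (hfibre i)]

theorem integral_inv_sq_comp_mul_sq_le (hw : Measurable w) {u v : ι → ℝ}
    (hu : ∀ i, u i ≠ 0) {V : Ω → ℝ} (hV : Integrable (fun ω => V ω ^ 2) μ) {K δ : ℝ}
    (hK : 0 ≤ K) (hpr : ∀ i, (μ {ω | w ω = i}).toReal ≤ u i ^ 2 / ∑ j, u j ^ 2 + δ)
    (hVcond : ∀ i, ∫ ω in {ω | w ω = i}, V ω ^ 2 ∂μ ≤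
      K * v i ^ 2 * (μ {ω | w ω = i}).toReal) :
    ∫ ω, (u (w ω) ^ 2)⁻¹ * V ω ^ 2 ∂μ ≤
      K * ((∑ i, v i ^ 2) / ∑ j, u j ^ 2 + δ * ∑ i, v i ^ 2 / u i ^ 2) := by
  rw [integral_comp_mul_eq_sum hw (fun i => (u i ^ 2)⁻¹) hV]
  calc ∑ i, (u i ^ 2)⁻¹ * ∫ ω in {ω | w ω = i}, V ω ^ 2 ∂μ
      ≤ ∑ i, K * (v i ^ 2 / u i ^ 2 * (μ {ω | w ω = i}).toReal) := by
        refine sum_le_sum fun i _ => ?_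
        calc (u i ^ 2)⁻¹ * ∫ ω in {ω | w ω = i}, V ω ^ 2 ∂μ
            ≤ (u i ^ 2)⁻¹ * (K * v i ^ 2 * (μ {ω | w ω = i}).toReal) :=
              mul_le_mul_of_nonneg_left (hVcond i) (by positivity)
          _ = K * (v i ^ 2 / u i ^ 2 * (μ {ω | w ω = i}).toReal) := by ring
    _ ≤ K * ((∑ i, v i ^ 2) / ∑ j, u j ^ 2 + δ * ∑ i, v i ^ 2 / u i ^ 2) := by
        rw [← mul_sum]
        exact mul_le_mul_of_nonneg_left (sum_div_sq_mul_le_of_le_add δ hu hpr) hK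

theorem integral_mul_sq_div_comp_sq_eq (u : ι → ℝ) {U V : Ω → ℝ}
    (hindep : IndepFun U (fun ω => (w ω, V ω)) μ) (hU : Integrable (fun ω => U ω ^ 4) μ)
    (hV : Integrable (fun ω => (u (w ω) ^ 2)⁻¹ * V ω ^ 2) μ) :
    ∫ ω, (V ω * U ω ^ 2 / u (w ω)) ^ 2 ∂μ =
      (∫ ω, U ω ^ 4 ∂μ) * ∫ ω, (u (w ω) ^ 2)⁻¹ * V ω ^ 2 ∂μ := by
  have hφ : Measurable fun p : ι × ℝ => (u p.1 ^ 2)⁻¹ * p.2 ^ 2 :=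
    ((measurable_of_countable fun i => (u i ^ 2)⁻¹).comp measurable_fst).mul
      (measurable_snd.pow_const 2)
  have hprod := (hindep.comp (measurable_id.pow_const 4) hφ).integral_mul_eq_mul_integral
    hU.aestronglyMeasurable hV.aestronglyMeasurable
  simp only [Pi.mul_apply, Function.comp_apply, id] at hprod
  rw [← hprod]
  congr 1
  funext ω
  ring

end RandomIndex

theorem inner_product_estimator_second_moment_general
    {Ω : Type*} [MeasurableSpace Ω] (μ : Measure Ω)
    (n : ℕ) (hn : 1 ≤ n) (u v : Fin n → ℝ) (hu : ∀ i, u i ≠ 0)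
    (δ γ : ℝ)
    (hv : ∑ i, v i ^ 2 ≤ γ * ∑ i, u i ^ 2)
    (K₁ K₂ : ℝ) (hK₁ : 0 ≤ K₁) (hK₂ : 0 ≤ K₂)
    (w : Ω → Fin n) (hw : Measurable w)
    (hpr : ∀ i, |(μ {ω | w ω = i}).toReal - u i ^ 2 / ∑ j, u j ^ 2| ≤ δ)
    (Uhat : Ω → ℝ) (hUmem : MemLp Uhat 4 μ)
    (hU4 : ∫ ω, Uhat ω ^ 4 ∂μ ≤ K₁ * (∑ j, u j ^ 2) ^ 2)
    (Vhat : Ω → ℝ) (hVmem : MemLp Vhat 2 μ)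
    (hVcond : ∀ i, ∫ ω in {ω | w ω = i}, Vhat ω ^ 2 ∂μ ≤
        K₂ * v i ^ 2 * (μ {ω | w ω = i}).toReal)
    (hindep : IndepFun Uhat (fun ω => (w ω, Vhat ω)) μ) :
    ∫ ω, (Vhat ω * Uhat ω ^ 2 / u (w ω)) ^ 2 ∂μ ≤
      K₁ * K₂ * (γ * (∑ j, u j ^ 2) ^ 2 +
        δ * (∑ j, u j ^ 2) ^ 2 * ∑ i, v i ^ 2 / u i ^ 2) := by
  set S := ∑ j, u j ^ 2
  have hS : 0 < S := sum_pos (fun i _ => sq_pos_of_ne_zero (hu i)) ⟨⟨0, hn⟩, mem_univ _⟩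
  have hU4int : Integrable (fun ω => Uhat ω ^ 4) μ := by
    simpa [Real.norm_eq_abs, (show Even 4 by decide).pow_abs] using
      hUmem.integrable_norm_pow (p := 4) four_ne_zero
  have hV2int := integrable_comp_mul hw (fun i => (u i ^ 2)⁻¹) hVmem.integrable_sq
  have hprob (i : Fin n) : (μ {ω | w ω = i}).toReal ≤ u i ^ 2 / S + δ := by
    linarith [(abs_sub_le_iff.mp (hpr i)).1]
  have hvS : (∑ i, v i ^ 2) / S ≤ γ := (div_le_iff₀ hS).2 hv
  rw [integral_mul_sq_div_comp_sq_eq u hindep hU4int hV2int]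
  calc (∫ ω, Uhat ω ^ 4 ∂μ) * ∫ ω, (u (w ω) ^ 2)⁻¹ * Vhat ω ^ 2 ∂μ
      ≤ (K₁ * S ^ 2) * (K₂ * (γ + δ * ∑ i, v i ^ 2 / u i ^ 2)) := by
        refine mul_le_mul hU4 ?_ (integral_nonneg fun ω => by positivity) (by positivity)
        refine (integral_inv_sq_comp_mul_sq_le hw hu hVmem.integrable_sq hK₂ hprob hVcond).trans ?_
        gcongr
    _ = K₁ * K₂ * (γ * S ^ 2 + δ * S ^ 2 * ∑ i, v i ^ 2 / u i ^ 2) := by ring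

/-- **inner-product estimator from an approximate `L₂` sampler, second
moment.** Let `u, v ∈ ℝⁿ` with all `u i ≠ 0`, `δ ≥ 0`, `γ > 0` with
`‖v‖₂² ≤ γ ‖u‖₂²`, and `K₁, K₂ ≥ 0`.  Let `w` be a random index with
`|Pr[w = i] − u i ² / ‖u‖₂²| ≤ δ` for every `i`; let `Û` satisfy `E[Û⁴] ≤ K₁ ‖u‖₂⁴`
and be independent of the pair `(w, V̂)`; and let `V̂` satisfy
`E[V̂² | w = i] ≤ K₂ v i ²` (expressed as `∫_{w = i} V̂² ≤ K₂ v i ² · Pr[w = i]`).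
Then for `W = V̂ · Û² / u_w`,
`E[W²] ≤ K₁ K₂ (γ ‖u‖₂⁴ + δ ‖u‖₂⁴ Σ_i v i ² / u i ²)`. -/
theorem inner_product_estimator_second_moment
    {Ω : Type*} [MeasurableSpace Ω] (μ : Measure Ω) [IsProbabilityMeasure μ]
    (n : ℕ) (hn : 1 ≤ n) (u v : Fin n → ℝ) (hu : ∀ i, u i ≠ 0)
    (δ γ : ℝ) (hδ : 0 ≤ δ) (hγ : 0 < γ)
    (hv : ∑ i, v i ^ 2 ≤ γ * ∑ i, u i ^ 2)
    (K₁ K₂ : ℝ) (hK₁ : 0 ≤ K₁) (hK₂ : 0 ≤ K₂)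
    (w : Ω → Fin n) (hw : Measurable w)
    (hpr : ∀ i, |(μ {ω | w ω = i}).toReal - u i ^ 2 / ∑ j, u j ^ 2| ≤ δ)
    (Uhat : Ω → ℝ) (hUmeas : Measurable Uhat) (hUmem : MemLp Uhat 4 μ)
    (hU4 : ∫ ω, Uhat ω ^ 4 ∂μ ≤ K₁ * (∑ j, u j ^ 2) ^ 2)
    (Vhat : Ω → ℝ) (hVmeas : Measurable Vhat) (hVmem : MemLp Vhat 2 μ)
    (hVcond : ∀ i, ∫ ω in {ω | w ω = i}, Vhat ω ^ 2 ∂μ ≤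
        K₂ * v i ^ 2 * (μ {ω | w ω = i}).toReal)
    (hindep : IndepFun Uhat (fun ω => (w ω, Vhat ω)) μ) :
    ∫ ω, (Vhat ω * Uhat ω ^ 2 / u (w ω)) ^ 2 ∂μ ≤
      K₁ * K₂ * (γ * (∑ j, u j ^ 2) ^ 2 +
        δ * (∑ j, u j ^ 2) ^ 2 * ∑ i, v i ^ 2 / u i ^ 2) :=
  inner_product_estimator_second_moment_general μ n hn u v hu δ γ hv K₁ K₂ hK₁ hK₂ w hw hpr Uhat
    hUmem hU4 Vhat hVmem hVcond hindep
end
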